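/- Let G : ℝᵈ → Mat(d,d) be differentiable, symmetric positive-definite valued, π : ℝᵈ → ℝ positive C², and suppose ∂G_{km}/∂x_j = ∂G_{jm}/∂x_k for all j,k,m. Then the drift b_i(x) = (1/2)Σ_j G⁻¹_{ij}(x)∂_{x_j}log π(x) + Ω_i(x), with Ω_i = |G|^{−1/2}Σ_j ∂_{x_j}[G⁻¹_{ij}|G|^{1/2}], and diffusion matrix V = G⁻¹ satisfy the Fokker–Planck stationarity condition b_i π = (1/2)Σ_j ∂_{x_j}(G⁻¹_{ij} π) for all i and x; i.e., the (uncorrected) MMALA diffusion has invariant density π under the integrability condition. -/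

import Mathlib

noncomputable def pd {d : ℕ} (f : (Fin d → ℝ) → ℝ) (x : Fin d → ℝ) (j : Fin d) : ℝ :=
  fderiv ℝ f x (Pi.single j 1)

/-!
By the product rule, the factor `|G|^{1/2}` in `Ωᵢ` contributes `½ Σⱼ G⁻¹ᵢⱼ tr (G⁻¹ ∂ⱼG)`
(Jacobi's formula), while `∂ⱼ G⁻¹ = -G⁻¹ (∂ⱼG) G⁻¹` gives
`Σⱼ ∂ⱼG⁻¹ᵢⱼ = -Σ_{j,p,q} G⁻¹_{ip} ∂ⱼG_{pq} G⁻¹_{qj}`. The integrability condition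
`∂ⱼG_{pq} = ∂ₚG_{jq}` lets one swap `j` and `p`, which turns this into
`-Σⱼ G⁻¹ᵢⱼ tr (G⁻¹ ∂ⱼG)`. Hence `Ω = ½ div G⁻¹ = Γ`, and for this drift stationarity is the
product rule `∂ⱼ(G⁻¹ᵢⱼ π) = (∂ⱼG⁻¹ᵢⱼ) π + G⁻¹ᵢⱼ π ∂ⱼ log π`.
-/

open Matrix

lemma Matrix.det_updateRow_eq_sum_mul_adjugate {n R : Type*} [Fintype n] [DecidableEq n]
    [CommRing R] (A : Matrix n n R) (k : n) (v : n → R) :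
    (A.updateRow k v).det = ∑ m, v m * A.adjugate m k := by
  rw [← cramer_transpose_apply, cramer_eq_adjugate_mulVec, ← adjugate_transpose, mulVec]
  simp only [dotProduct, transpose_apply, mul_comm]

section MatrixCalculus

variable {n E : Type*} [Fintype n] [NormedAddCommGroup E] [NormedSpace ℝ E]
  {M : E → Matrix n n ℝ} {x : E}

/-- Entrywise directional derivative: `Matrix n n ℝ` carries no norm instance. -/
noncomputable def matrixFDeriv (M : E → Matrix n n ℝ) (x v : E) : Matrix n n ℝ :=
  of fun a b => fderiv ℝ (fun y => M y a b) x v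

lemma matrixFDeriv_mul {A B : E → Matrix n n ℝ}
    (hA : ∀ a b, DifferentiableAt ℝ (fun y => A y a b) x)
    (hB : ∀ a b, DifferentiableAt ℝ (fun y => B y a b) x) (v : E) :
    matrixFDeriv (fun y => A y * B y) x v
      = matrixFDeriv A x v * B x + A x * matrixFDeriv B x v := by
  ext a b
  simp only [matrixFDeriv, of_apply, Matrix.add_apply, mul_apply]
  rw [fderiv_fun_sum (u := Finset.univ) (A := fun k y => A y a k * B y k b)
    fun k _ => (hA a k).mul (hB k b)]
  simp only [FunLike.coe_sum, Finset.sum_apply, ← Finset.sum_add_distrib]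
  refine Finset.sum_congr rfl fun k _ => ?_
  rw [fderiv_fun_mul (hA a k) (hB k b)]
  simp only [_root_.add_apply, _root_.smul_apply, smul_eq_mul]
  ring

variable [DecidableEq n]

noncomputable def Matrix.detRowContinuousMultilinear :
    ContinuousMultilinearMap ℝ (fun _ : n => n → ℝ) ℝ :=
  { detRowAlternating.toMultilinearMap with cont := continuous_id.matrix_det }

lemma hasFDerivAt_det (hM : ∀ a b, DifferentiableAt ℝ (fun y => M y a b) x) :
    HasFDerivAt (fun y => (M y).det)
      (∑ k, (detRowContinuousMultilinear.toContinuousLinearMap (M x) k) ∘L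
        fderiv ℝ (fun y => M y k) x) x :=
  HasFDerivAt.multilinear_comp detRowContinuousMultilinear
    fun k => (differentiableAt_pi.2 (hM k)).hasFDerivAt

lemma differentiableAt_det (hM : ∀ a b, DifferentiableAt ℝ (fun y => M y a b) x) :
    DifferentiableAt ℝ (fun y => (M y).det) x :=
  (hasFDerivAt_det hM).differentiableAt

/-- Jacobi's formula. -/
lemma fderiv_det_apply (hM : ∀ a b, DifferentiableAt ℝ (fun y => M y a b) x) (v : E) :
    fderiv ℝ (fun y => (M y).det) x v = trace ((M x).adjugate * matrixFDeriv M x v) := by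
  have hrow : ∀ k, fderiv ℝ (fun y => M y k) x v = fun m => matrixFDeriv M x v k m := fun k => by
    ext m
    rw [fderiv_pi (hM k)]
    rfl
  rw [(hasFDerivAt_det hM).fderiv]
  simp only [FunLike.coe_sum, Finset.sum_apply, ContinuousLinearMap.coe_comp,
    Function.comp_apply, hrow]
  change ∑ k, ((M x).updateRow k _).det = _
  simp only [det_updateRow_eq_sum_mul_adjugate, trace, diag, mul_apply]
  rw [Finset.sum_comm]
  simp only [mul_comm]

lemma differentiableAt_inv_apply (hM : ∀ a b, DifferentiableAt ℝ (fun y => M y a b) x)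
    (hx : (M x).det ≠ 0) (a b : n) : DifferentiableAt ℝ (fun y => (M y)⁻¹ a b) x := by
  have hadj : DifferentiableAt ℝ (fun y => (M y).adjugate a b) x := by
    simp only [adjugate_apply]
    refine differentiableAt_det fun k m => ?_
    rcases eq_or_ne k b with rfl | hk
    · simp
    · simpa [updateRow_apply, hk] using hM k m
  simp only [inv_def, Ring.inverse_eq_inv', Matrix.smul_apply, smul_eq_mul]
  exact ((differentiableAt_det hM).inv hx).mul hadj

lemma matrixFDeriv_inv (hM : ∀ a b, DifferentiableAt ℝ (fun y => M y a b) x)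
    (hx : (M x).det ≠ 0) (v : E) :
    matrixFDeriv (fun y => (M y)⁻¹) x v = -((M x)⁻¹ * matrixFDeriv M x v * (M x)⁻¹) := by
  have hU : IsUnit (M x).det := hx.isUnit
  have hone : matrixFDeriv (fun y => M y * (M y)⁻¹) x v = 0 := by
    have hnear : ∀ᶠ y in nhds x, M y * (M y)⁻¹ = 1 :=
      ((differentiableAt_det hM).continuousAt.eventually_ne hx).mono fun y hy =>
        mul_nonsing_inv _ hy.isUnit
    ext a b
    rw [matrixFDeriv, of_apply, Filter.EventuallyEq.fderiv_eq (hnear.mono fun y hy => by rw [hy])]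
    simp
  rw [matrixFDeriv_mul hM (differentiableAt_inv_apply hM hx) v] at hone
  calc matrixFDeriv (fun y => (M y)⁻¹) x v
      = (M x)⁻¹ * (M x * matrixFDeriv (fun y => (M y)⁻¹) x v) := by
        rw [← Matrix.mul_assoc, nonsing_inv_mul _ hU, Matrix.one_mul]
    _ = -((M x)⁻¹ * matrixFDeriv M x v * (M x)⁻¹) := by
        rw [eq_neg_of_add_eq_zero_right hone]
        simp only [Matrix.mul_neg, Matrix.mul_assoc]

lemma fderiv_det_apply_eq_det_mul_trace (hM : ∀ a b, DifferentiableAt ℝ (fun y => M y a b) x)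
    (hx : (M x).det ≠ 0) (v : E) :
    fderiv ℝ (fun y => (M y).det) x v = (M x).det * trace ((M x)⁻¹ * matrixFDeriv M x v) := by
  have hadj : (M x).adjugate = (M x).det • (M x)⁻¹ := by
    rw [inv_def, smul_smul, Ring.inverse_eq_inv', mul_inv_cancel₀ hx, one_smul]
  rw [fderiv_det_apply hM, hadj, Matrix.smul_mul, trace_smul, smul_eq_mul]

end MatrixCalculus

lemma Matrix.sum_mul_mul_apply_eq_sum_mul_trace {n R : Type*} [Fintype n] [CommRing R]
    (A : Matrix n n R) (D : n → Matrix n n R) (hD : ∀ j p q, D j p q = D p j q) (i : n) :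
    ∑ j, (A * D j * A) i j = ∑ j, A i j * trace (A * D j) := by
  simp only [mul_apply, trace, diag, Finset.sum_mul, Finset.mul_sum]
  calc ∑ b, ∑ c, ∑ a, A i a * D b a c * A c b
      = ∑ b, ∑ a, ∑ c, A i a * D a b c * A c b := by
        refine Finset.sum_congr rfl fun b _ => ?_
        rw [Finset.sum_comm]
        simp only [hD b]
    _ = ∑ a, ∑ b, ∑ c, A i a * D a b c * A c b := Finset.sum_comm
    _ = ∑ a, ∑ c, ∑ b, A i a * (A c b * D a b c) := by
        refine Finset.sum_congr rfl fun a _ => ?_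
        rw [Finset.sum_comm]
        simp only [mul_comm, mul_left_comm]

section Coordinates

variable {d : ℕ} {x : Fin d → ℝ} {G : (Fin d → ℝ) → Matrix (Fin d) (Fin d) ℝ}

lemma pd_mul {f g : (Fin d → ℝ) → ℝ} (hf : DifferentiableAt ℝ f x) (hg : DifferentiableAt ℝ g x)
    (j : Fin d) : pd (fun y => f y * g y) x j = pd f x j * g x + f x * pd g x j := by
  simp only [pd, fderiv_fun_mul hf hg, _root_.add_apply, _root_.smul_apply, smul_eq_mul]
  ring

lemma divergence_inv_eq_neg_sum_mul_trace
    (hG : ∀ a b, DifferentiableAt ℝ (fun y => G y a b) x) (hx : (G x).det ≠ 0)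
    (hint : ∀ j k m, pd (fun y => G y k m) x j = pd (fun y => G y j m) x k) (i : Fin d) :
    ∑ j, pd (fun y => (G y)⁻¹ i j) x j
      = -∑ j, (G x)⁻¹ i j * trace ((G x)⁻¹ * matrixFDeriv G x (Pi.single j 1)) := by
  have hinv : ∀ j, pd (fun y => (G y)⁻¹ i j) x j
      = -((G x)⁻¹ * matrixFDeriv G x (Pi.single j 1) * (G x)⁻¹) i j := fun j =>
    congrFun (congrFun (matrixFDeriv_inv hG hx (Pi.single j 1)) i) j
  simp only [hinv, Finset.sum_neg_distrib]
  rw [sum_mul_mul_apply_eq_sum_mul_trace _ (fun j => matrixFDeriv G x (Pi.single j 1))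
    fun j p q => hint j p q]

lemma pd_sqrt_det
    (hG : ∀ a b, DifferentiableAt ℝ (fun y => G y a b) x) (hx : 0 < (G x).det) (j : Fin d) :
    pd (fun y => √(G y).det) x j
      = √(G x).det / 2 * trace ((G x)⁻¹ * matrixFDeriv G x (Pi.single j 1)) := by
  have hs : √(G x).det ≠ 0 := (Real.sqrt_pos.2 hx).ne'
  rw [pd, fderiv_sqrt (differentiableAt_det hG) hx.ne', _root_.smul_apply,
    fderiv_det_apply_eq_det_mul_trace hG hx.ne', smul_eq_mul]
  nth_rewrite 2 [← Real.mul_self_sqrt hx.le]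
  field_simp

lemma sqrt_det_inv_mul_divergence_eq_half_divergence
    (hG : ∀ a b, DifferentiableAt ℝ (fun y => G y a b) x) (hx : 0 < (G x).det)
    (hint : ∀ j k m, pd (fun y => G y k m) x j = pd (fun y => G y j m) x k) (i : Fin d) :
    (√(G x).det)⁻¹ * ∑ j, pd (fun y => (G y)⁻¹ i j * √(G y).det) x j
      = 1 / 2 * ∑ j, pd (fun y => (G y)⁻¹ i j) x j := by
  set tr := fun j => trace ((G x)⁻¹ * matrixFDeriv G x (Pi.single j 1))
  have hprod : ∑ j, pd (fun y => (G y)⁻¹ i j * √(G y).det) x j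
      = (∑ j, pd (fun y => (G y)⁻¹ i j) x j) * √(G x).det
        + √(G x).det / 2 * ∑ j, (G x)⁻¹ i j * tr j := by
    simp only [pd_mul (differentiableAt_inv_apply hG hx.ne' i _)
      ((differentiableAt_det hG).sqrt hx.ne'), pd_sqrt_det hG hx, Finset.sum_add_distrib,
      Finset.sum_mul, Finset.mul_sum]
    congr 1
    exact Finset.sum_congr rfl fun j _ => by ring
  rw [hprod, divergence_inv_eq_neg_sum_mul_trace hG hx.ne' hint i]
  field_simp
  ring

lemma log_gradient_add_divergence_mul_eq_divergence_mul {a : Fin d → (Fin d → ℝ) → ℝ}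
    {π : (Fin d → ℝ) → ℝ} (ha : ∀ j, DifferentiableAt ℝ (a j) x)
    (hπ : DifferentiableAt ℝ π x) (hπx : π x ≠ 0) :
    (1 / 2 * ∑ j, a j x * pd (fun y => Real.log (π y)) x j + 1 / 2 * ∑ j, pd (a j) x j) * π x
      = 1 / 2 * ∑ j, pd (fun y => a j y * π y) x j := by
  have hlog : ∀ j, pd (fun y => Real.log (π y)) x j = pd π x j / π x := fun j => by
    rw [pd, fderiv.log hπ hπx, _root_.smul_apply, smul_eq_mul, inv_mul_eq_div, pd]
  simp only [hlog, pd_mul (ha _) hπ, Finset.sum_add_distrib, ← Finset.sum_mul, ← mul_div_assoc,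
    ← Finset.sum_div]
  field_simp
  ring

end Coordinates

/-- Under the integrability condition, the (uncorrected) MMALA drift
`b = (1/2)G⁻¹∇log π + Ω` with `Ωᵢ = |G|^{−1/2}Σⱼ∂ⱼ[G⁻¹ᵢⱼ|G|^{1/2}]` and diffusion
matrix `V = G⁻¹` satisfy the Fokker–Planck stationarity condition for `π`. -/
theorem stmt18 {d : ℕ} (G : (Fin d → ℝ) → Matrix (Fin d) (Fin d) ℝ)
    (hGdiff : ∀ i j, Differentiable ℝ (fun x => G x i j))
    (hGpd : ∀ x, (G x).PosDef)
    (π : (Fin d → ℝ) → ℝ) (hπpos : ∀ x, 0 < π x) (hπC2 : ContDiff ℝ 2 π)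
    (hint : ∀ (j k m : Fin d) (x : Fin d → ℝ),
      pd (fun y => G y k m) x j = pd (fun y => G y j m) x k) :
    ∀ (i : Fin d) (x : Fin d → ℝ),
      ((1 / 2) * ∑ j, (G x)⁻¹ i j * pd (fun y => Real.log (π y)) x j
          + (Real.sqrt (G x).det)⁻¹ *
              ∑ j, pd (fun y => (G y)⁻¹ i j * Real.sqrt (G y).det) x j) * π x =
        (1 / 2) * ∑ j, pd (fun y => (G y)⁻¹ i j * π y) x j := by
  intro i x
  have hG : ∀ a b, DifferentiableAt ℝ (fun y => G y a b) x := fun a b => hGdiff a b x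
  have hdet : 0 < (G x).det := (hGpd x).det_pos
  rw [sqrt_det_inv_mul_divergence_eq_half_divergence hG hdet (fun j k m => hint j k m x)]
  exact log_gradient_add_divergence_mul_eq_divergence_mul
    (a := fun j y => (G y)⁻¹ i j) (fun j => differentiableAt_inv_apply hG hdet.ne' i j)
    (hπC2.differentiable (by norm_num) x) (hπpos x).ne'
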